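/- arXiv:2209.04328 — 4 statements merged into one kernel-verified Lean document; each statement's English description precedes it below -/
import Mathlib

section
/- Let n ≥ 1 and let a, b be two distinct complex numbers. If f : ℂⁿ → ℂ is an entire (holomorphic on all of ℂⁿ) function such that for every z ∈ ℂⁿ the product ∏_{i=1}^n (∂f/∂z_i(z) − a)·(∂f/∂z_i(z) − b)·(∂f/∂z_i(z) − f(z)) is nonzero, then f is constant. -/
/-!
Each `∂f/∂zᵢ` is entire and omits `a` and `b`, so by Little Picard (on complex lines) it is a
constant `cᵢ`. Then `f` is affine along the `i`-th axis with slope `cᵢ`, so `cᵢ ≠ 0` would produce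
a point where `f = cᵢ = ∂f/∂zᵢ`; hence all `cᵢ = 0` and `f` is constant.

Little Picard is proved via Bloch's theorem. If `g` omits `0` and `1`, then `p = log g / 2πi` omits
every integer, and `p = cosh² v` for an entire `v` (built from square roots of `p` and `p - 1`).
The points `w` with `cosh² w ∈ ℤ` form a `3`-net of `ℂ`, whereas the range of a nonconstant entire
function contains balls of every radius: a maximizing point `q` of `(R - |z - z₀|) |g'(z)|` on
`closedBall z₀ R` gives a disk around `q` on which `|g'| ≤ 2 |g'(q)|`, and there the Schwarz lemma
makes `g` nearly linear.
-/

open Filter Topology Metric Set Complex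
open scoped Real

theorem Differentiable.exists_exp_eq {g : ℂ → ℂ} (hg : Differentiable ℂ g) (h0 : ∀ z, g z ≠ 0) :
    ∃ L : ℂ → ℂ, Differentiable ℂ L ∧ ∀ z, Complex.exp (L z) = g z := by
  obtain ⟨L, hL0, hL⟩ := (hg.deriv.div hg h0).isExactOn_univ.with_val_at 0 (Complex.log (g 0))
  have hLd : Differentiable ℂ L := fun z => (hL z trivial).differentiableAt
  have hconst : ∀ z, g z * Complex.exp (-L z) = g 0 * Complex.exp (-L 0) := by
    refine fun z => is_const_of_deriv_eq_zero (hg.mul hLd.neg.cexp) (fun x => ?_) z 0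
    have := (hg x).hasDerivAt.mul (hL x trivial).neg.cexp
    rw [this.deriv]
    simp only [Pi.div_apply, Pi.neg_apply]
    field_simp [h0 x]
    ring
  refine ⟨L, hLd, fun z => ?_⟩
  have := hconst z
  simp only [hL0, Complex.exp_neg, exp_log (h0 0), mul_inv_cancel₀ (h0 0)] at this
  exact ((mul_inv_eq_one₀ (Complex.exp_ne_zero _)).1 this).symm

theorem Differentiable.exists_sq_eq {g : ℂ → ℂ} (hg : Differentiable ℂ g) (h0 : ∀ z, g z ≠ 0) :
    ∃ s : ℂ → ℂ, Differentiable ℂ s ∧ ∀ z, s z ^ 2 = g z := by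
  obtain ⟨L, hL, hexp⟩ := hg.exists_exp_eq h0
  refine ⟨fun z => Complex.exp (L z / 2), (hL.div_const 2).cexp, fun z => ?_⟩
  rw [← exp_nat_mul, ← hexp z]
  ring_nf

theorem Differentiable.exists_cosh_sq_eq {p : ℂ → ℂ} (hp : Differentiable ℂ p)
    (h0 : ∀ z, p z ≠ 0) (h1 : ∀ z, p z ≠ 1) :
    ∃ v : ℂ → ℂ, Differentiable ℂ v ∧ ∀ z, Complex.cosh (v z) ^ 2 = p z := by
  obtain ⟨s, hs, hs2⟩ := hp.exists_sq_eq h0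
  obtain ⟨t, ht, ht2⟩ := (hp.sub_const 1).exists_sq_eq fun z => sub_ne_zero.2 (h1 z)
  have hunit : ∀ z, (s z + t z) * (s z - t z) = 1 := fun z => by
    linear_combination hs2 z - ht2 z
  obtain ⟨v, hv, hexp⟩ := (hs.add ht).exists_exp_eq fun z => left_ne_zero_of_mul_eq_one (hunit z)
  refine ⟨v, hv, fun z => ?_⟩
  have hcosh : Complex.cosh (v z) = s z := by
    have := two_cosh (v z)
    rw [Complex.exp_neg, hexp z, Pi.add_apply, inv_eq_of_mul_eq_one_right (hunit z)] at this
    linear_combination this / 2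
  rw [hcosh, hs2]

theorem Real.exists_abs_sub_le_one_cosh_sq_eq_intCast (x : ℝ) :
    ∃ t, |x - t| ≤ 1 ∧ ∃ m : ℤ, Real.cosh t ^ 2 = m := by
  wlog hx : 0 ≤ x generalizing x
  · obtain ⟨t, ht, m, hm⟩ := this (-x) (by linarith)
    exact ⟨-t, by rwa [show x - -t = -(-x - t) by ring, abs_neg], m, by rwa [Real.cosh_neg]⟩
  rcases le_or_gt x 1 with hx1 | hx1
  · exact ⟨0, by rwa [sub_zero, abs_of_nonneg hx], 1, by simp⟩
  have hgap : Real.cosh (x - 1) ^ 2 + 1 ≤ Real.cosh (x + 1) ^ 2 := by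
    have hsinh : 1 ≤ Real.sinh x := hx1.le.trans (Real.self_le_sinh_iff.2 hx)
    have hsinh1 : 1 ≤ Real.sinh 1 := Real.self_le_sinh_iff.2 zero_le_one
    have hcosh := Real.one_le_cosh x
    have hcosh1 := Real.one_le_cosh 1
    rw [Real.cosh_add, Real.cosh_sub]
    nlinarith [mul_le_mul hcosh hsinh zero_le_one (by linarith),
      mul_le_mul hcosh1 hsinh1 zero_le_one (by linarith)]
  obtain ⟨t, ht, hm⟩ := intermediate_value_Icc (by linarith : x - 1 ≤ x + 1)
    (by fun_prop : Continuous fun t => Real.cosh t ^ 2).continuousOn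
    ⟨Int.le_ceil _, (Int.ceil_lt_add_one _).le.trans hgap⟩
  exact ⟨t, abs_le.2 ⟨by linarith [ht.2], by linarith [ht.1]⟩, _, hm⟩

theorem Complex.exists_dist_le_cosh_sq_eq_intCast (w : ℂ) :
    ∃ e, dist w e ≤ 3 ∧ ∃ m : ℤ, cosh e ^ 2 = m := by
  obtain ⟨t, ht, m, hm⟩ := Real.exists_abs_sub_le_one_cosh_sq_eq_intCast w.re
  set n := round (w.im / π)
  have him : |w.im - n * π| ≤ π / 2 := by
    have := mul_le_mul_of_nonneg_right (abs_sub_round (w.im / π)) Real.pi_pos.le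
    rw [show w.im - n * π = (w.im / π - n) * π by field_simp, abs_mul, abs_of_pos Real.pi_pos]
    linarith
  have hper : Function.Periodic (fun z => cosh z ^ 2) (π * I) := fun z => by simp
  refine ⟨t + n * (π * I), ?_, m, ?_⟩
  · calc dist w (t + n * (π * I)) ≤ |w.re - t| + |w.im - n * π| := by
          refine (dist_eq_norm _ _).trans_le ((norm_le_abs_re_add_abs_im _).trans_eq ?_)
          simp
      _ ≤ 1 + π / 2 := add_le_add ht him
      _ ≤ 3 := by linarith [Real.pi_le_four]
  · rw [show cosh (t + n * (π * I)) ^ 2 = cosh t ^ 2 from hper.int_mul n t, ← ofReal_cosh,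
      ← ofReal_pow, hm, ofReal_intCast]

theorem Continuous.exists_forall_closedBall_le_two_mul {X : Type*} [PseudoMetricSpace X]
    [ProperSpace X] {φ : X → ℝ} (hφ : Continuous φ) (hφ0 : ∀ x, 0 ≤ φ x) {x₀ : X}
    (hx₀ : 0 < φ x₀) {R : ℝ} (hR : 0 < R) :
    ∃ p s, 0 < s ∧ R * φ x₀ ≤ 2 * s * φ p ∧ ∀ x ∈ closedBall p s, φ x ≤ 2 * φ p := by
  obtain ⟨p, -, hpmax⟩ := (isCompact_closedBall x₀ R).exists_isMaxOn
    ⟨x₀, mem_closedBall_self hR.le⟩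
    (by fun_prop : Continuous fun x => (R - dist x x₀) * φ x).continuousOn
  have hKp : R * φ x₀ ≤ (R - dist p x₀) * φ p := by
    simpa using hpmax (mem_closedBall_self hR.le)
  have hdist : dist p x₀ < R := by
    by_contra! h
    nlinarith [hφ0 p]
  refine ⟨p, (R - dist p x₀) / 2, by linarith, by linarith, fun x hx => ?_⟩
  have htri := dist_triangle x p x₀
  rw [mem_closedBall] at hx
  have hKx : (R - dist x x₀) * φ x ≤ (R - dist p x₀) * φ p :=
    hpmax (mem_closedBall.2 (by linarith))
  nlinarith [hφ0 x]

theorem Complex.norm_sub_sub_smul_deriv_le {E : Type*} [NormedAddCommGroup E] [NormedSpace ℂ E]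
    {g : ℂ → E} {p z : ℂ} {s M : ℝ} (hg : DifferentiableOn ℂ g (ball p s))
    (hM : ∀ w ∈ ball p s, ‖g w - g p‖ ≤ M) (hz : z ∈ ball p s) :
    ‖g z - g p - (z - p) • deriv g p‖ ≤ (M + s * ‖deriv g p‖) * (‖z - p‖ / s) ^ 2 := by
  have hp : p ∈ ball p s := mem_ball_self (pos_of_mem_ball hz)
  set h : ℂ → E := fun w => g w - (w - p) • deriv g p
  have hd : DifferentiableOn ℂ h (ball p s) :=
    hg.sub ((differentiableOn_id.sub_const p).smul_const _)
  have hmaps : MapsTo h (ball p s) (closedBall (h p) (M + s * ‖deriv g p‖)) := by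
    intro w hw
    rw [mem_closedBall, dist_eq_norm]
    calc ‖h w - h p‖ = ‖(g w - g p) - (w - p) • deriv g p‖ := by simp [h, sub_right_comm]
      _ ≤ ‖g w - g p‖ + ‖w - p‖ * ‖deriv g p‖ := (norm_sub_le _ _).trans_eq (by rw [norm_smul])
      _ ≤ M + s * ‖deriv g p‖ := by
        gcongr
        exacts [hM w hw, (mem_ball_iff_norm.1 hw).le]
  -- `h` has vanishing derivative at `p`, so the Schwarz lemma applies with one extra power
  have hderiv : HasDerivAt h 0 p := by
    have := ((hg.differentiableAt (isOpen_ball.mem_nhds hp)).hasDerivAt).fun_sub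
      (((hasDerivAt_id p).sub_const p).smul_const (deriv g p))
    simpa [h] using this
  have hlo : (h · - h p) =o[𝓝 p] (fun w => ‖w - p‖ ^ 1) := by
    simpa using (hasDerivAt_iff_isLittleO.1 hderiv).norm_right
  have := Complex.dist_le_mul_div_pow_of_mapsTo_ball_of_isLittleO hd hmaps hlo hz
  simpa [h, dist_eq_norm, sub_right_comm] using this

theorem Complex.ball_subset_range_of_norm_deriv_le {g : ℂ → ℂ} (hg : Differentiable ℂ g)
    {p : ℂ} {s : ℝ} (hs : 0 < s) (hp : deriv g p ≠ 0)
    (hbound : ∀ z ∈ closedBall p s, ‖deriv g z‖ ≤ 2 * ‖deriv g p‖) :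
    ball (g p) (s * ‖deriv g p‖ / 24) ⊆ range g := by
  set d := ‖deriv g p‖
  have hM : ∀ z ∈ closedBall p s, ‖g z - g p‖ ≤ 2 * d * s := fun z hz =>
    calc ‖g z - g p‖ ≤ 2 * d * ‖z - p‖ :=
          (convex_closedBall p s).norm_image_sub_le_of_norm_deriv_le (fun x _ => hg x) hbound
            (mem_closedBall_self hs.le) hz
      _ ≤ 2 * d * s := by gcongr; exact mem_closedBall_iff_norm.1 hz
  have hlow : ∀ z ∈ sphere p (s / 6), s * d / 12 ≤ ‖g z - g p‖ := by
    intro z hz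
    have hzp : ‖z - p‖ = s / 6 := mem_sphere_iff_norm.1 hz
    have htaylor := norm_sub_sub_smul_deriv_le hg.differentiableOn
      (fun w hw => hM w (ball_subset_closedBall hw))
      (mem_ball_iff_norm.2 (by linarith) : z ∈ ball p s)
    have hlin : ‖(z - p) • deriv g p‖ = s / 6 * d := by rw [norm_smul, hzp]
    have := norm_sub_le (g z - g p) (g z - g p - (z - p) • deriv g p)
    rw [sub_sub_cancel, hlin] at this
    rw [hzp] at htaylor
    change _ ≤ (2 * d * s + s * d) * _ at htaylor
    have : (2 * d * s + s * d) * (s / 6 / s) ^ 2 = s * d / 12 := by field_simp; ring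
    nlinarith
  have hfreq : ∃ᶠ z in 𝓝 p, g z ≠ g p :=
    ((hg p).hasDerivAt.eventually_ne hp).frequently.filter_mono nhdsWithin_le_nhds
  calc ball (g p) (s * d / 24) = ball (g p) (s * d / 12 / 2) := by ring_nf
    _ ⊆ g '' closedBall p (s / 6) :=
      hg.diffContOnCl.ball_subset_image_closedBall (by positivity) hlow hfreq
    _ ⊆ range g := image_subset_range _ _

theorem Complex.exists_ball_subset_range {g : ℂ → ℂ} (hg : Differentiable ℂ g) {z w : ℂ}
    (hzw : g z ≠ g w) (ρ : ℝ) : ∃ p, ball (g p) ρ ⊆ range g := by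
  rcases le_or_gt ρ 0 with hρ | hρ
  · exact ⟨z, by simp [ball_eq_empty.2 hρ]⟩
  obtain ⟨z₀, h0⟩ : ∃ z₀, deriv g z₀ ≠ 0 := by
    by_contra! h
    exact hzw (is_const_of_deriv_eq_zero hg h z w)
  have hd0 : 0 < ‖deriv g z₀‖ := norm_pos_iff.2 h0
  obtain ⟨p, s, hs, hRs, hbound⟩ := hg.deriv.continuous.norm.exists_forall_closedBall_le_two_mul
    (fun _ => norm_nonneg _) hd0 (R := 48 * ρ / ‖deriv g z₀‖) (by positivity)
  rw [div_mul_cancel₀ _ hd0.ne'] at hRs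
  have hp : deriv g p ≠ 0 := by
    rintro h
    rw [h, norm_zero, mul_zero] at hRs
    linarith
  exact ⟨p, (ball_subset_ball (by linarith)).trans
    (ball_subset_range_of_norm_deriv_le hg hs hp hbound)⟩

theorem Differentiable.apply_eq_apply_of_forall_ne_intCast {p : ℂ → ℂ} (hp : Differentiable ℂ p)
    (hZ : ∀ z (m : ℤ), p z ≠ m) (z w : ℂ) : p z = p w := by
  obtain ⟨v, hv, hcosh⟩ := hp.exists_cosh_sq_eq (fun z => by exact_mod_cast hZ z 0)
    (fun z => by exact_mod_cast hZ z 1)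
  have hv_const : ∀ z w, v z = v w := by
    by_contra! ⟨z, w, hzw⟩
    obtain ⟨q, hq⟩ := exists_ball_subset_range hv hzw 4
    obtain ⟨e, he, m, hm⟩ := exists_dist_le_cosh_sq_eq_intCast (v q)
    obtain ⟨y, rfl⟩ := hq (mem_ball_comm.1 (he.trans_lt (by norm_num)))
    exact hZ y m (by rw [← hcosh y, hm])
  rw [← hcosh z, ← hcosh w, hv_const z w]

theorem Differentiable.apply_eq_apply_of_ne_zero_of_ne_one {g : ℂ → ℂ} (hg : Differentiable ℂ g)
    (h0 : ∀ z, g z ≠ 0) (h1 : ∀ z, g z ≠ 1) (z w : ℂ) : g z = g w := by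
  obtain ⟨L, hL, hexp⟩ := hg.exists_exp_eq h0
  have hZ : ∀ z (m : ℤ), L z / (2 * π * I) ≠ m := fun z m hm => h1 z <| by
    rw [div_eq_iff two_pi_I_ne_zero] at hm
    rw [← hexp z, hm, exp_int_mul_two_pi_mul_I]
  have := (hL.div_const _).apply_eq_apply_of_forall_ne_intCast hZ z w
  rw [← hexp z, ← hexp w, div_left_inj' two_pi_I_ne_zero |>.1 this]

theorem Differentiable.apply_eq_apply_of_forall_ne {E : Type*} [NormedAddCommGroup E]
    [NormedSpace ℂ E] {g : E → ℂ} (hg : Differentiable ℂ g) {a b : ℂ} (hab : a ≠ b)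
    (ha : ∀ z, g z ≠ a) (hb : ∀ z, g z ≠ b) (z w : E) : g z = g w := by
  have hba : b - a ≠ 0 := sub_ne_zero.2 hab.symm
  set G : ℂ → ℂ := fun t => (g (t • (w - z) + z) - a) / (b - a)
  have hG : Differentiable ℂ G :=
    ((hg.comp ((differentiable_id.smul_const (w - z)).add_const z)).sub_const a).div_const _
  have := hG.apply_eq_apply_of_ne_zero_of_ne_one
    (fun t => div_ne_zero (sub_ne_zero.2 (ha _)) hba)
    (fun t => by simpa [G, div_eq_one_iff_eq hba] using hb _) 0 1
  simpa [G, hba] using this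

theorem Differentiable.apply_add_smul_eq_of_fderiv_apply_eq {𝕜 E F : Type*} [RCLike 𝕜]
    [NormedAddCommGroup E] [NormedSpace 𝕜 E] [NormedAddCommGroup F] [NormedSpace 𝕜 F]
    {g : E → F} (hg : Differentiable 𝕜 g) {v : E} {c : F} (hc : ∀ z, fderiv 𝕜 g z v = c)
    (z : E) (t : 𝕜) : g (z + t • v) = g z + t • c := by
  have hline : ∀ s : 𝕜, HasDerivAt (fun s => g (z + s • v) - s • c) 0 s := by
    intro s
    have := (hg (z + s • v)).hasFDerivAt.comp_hasDerivAt s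
      (((hasDerivAt_id s).smul_const v).const_add z)
    simpa [hc] using this.fun_sub ((hasDerivAt_id s).smul_const c)
  have := is_const_of_deriv_eq_zero (fun s => (hline s).differentiableAt)
    (fun s => (hline s).deriv) t 0
  simpa [sub_eq_iff_eq_add] using this

/-- The partial derivative ∂f/∂z_i of f : ℂⁿ → ℂ at z. -/
noncomputable def pd {n : ℕ} (f : EuclideanSpace ℂ (Fin n) → ℂ) (i : Fin n)
    (z : EuclideanSpace ℂ (Fin n)) : ℂ :=
  fderiv ℂ f z (EuclideanSpace.single i 1)

theorem stmt_0_general {n : ℕ} (a b : ℂ) (hab : a ≠ b)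
    (f : EuclideanSpace ℂ (Fin n) → ℂ) (hf : AnalyticOnNhd ℂ f Set.univ)
    (h : ∀ z, (∏ i : Fin n,
      (pd f i z - a) * (pd f i z - b) * (pd f i z - f z)) ≠ 0) :
    ∀ z w, f z = f w := by
  have hne : ∀ z i, pd f i z ≠ a ∧ pd f i z ≠ b ∧ pd f i z ≠ f z := fun z i => by
    simpa [sub_ne_zero, and_assoc] using Finset.prod_ne_zero_iff.1 (h z) i (Finset.mem_univ i)
  have hfd : Differentiable ℂ f := fun z => (hf z trivial).differentiableAt
  have hpd : ∀ i, Differentiable ℂ (pd f i) := fun i =>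
    (differentiableOn_univ.1 hf.fderiv.differentiableOn).clm_apply (differentiable_const _)
  have hconst : ∀ i z, pd f i z = pd f i 0 := fun i z =>
    (hpd i).apply_eq_apply_of_forall_ne hab (fun z => (hne z i).1) (fun z => (hne z i).2.1) z 0
  have hzero : ∀ i, pd f i 0 = 0 := by
    intro i
    by_contra hc
    set t := (pd f i 0 - f 0) / pd f i 0
    have hline : f (0 + t • EuclideanSpace.single i 1) = f 0 + t * pd f i 0 :=
      hfd.apply_add_smul_eq_of_fderiv_apply_eq (fun z => hconst i z) 0 t
    apply (hne (0 + t • EuclideanSpace.single i 1) i).2.2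
    rw [hline, hconst, div_mul_cancel₀ _ hc]
    ring
  have hfderiv : ∀ z, fderiv ℂ f z = 0 := fun z => by
    refine ContinuousLinearMap.coe_injective
      ((EuclideanSpace.basisFun (Fin n) ℂ).toBasis.ext fun i => ?_)
    simpa [pd] using (hconst i z).trans (hzero i)
  exact fun z w => is_const_of_fderiv_eq_zero hfd hfderiv z w

/-- If `f` is entire on ℂⁿ and the product
∏ᵢ (∂f/∂zᵢ − a)(∂f/∂zᵢ − b)(∂f/∂zᵢ − f) never vanishes, then `f` is constant. -/
theorem stmt_0 {n : ℕ} (hn : 1 ≤ n) (a b : ℂ) (hab : a ≠ b)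
    (f : EuclideanSpace ℂ (Fin n) → ℂ) (hf : AnalyticOnNhd ℂ f Set.univ)
    (h : ∀ z, (∏ i : Fin n,
      (pd f i z - a) * (pd f i z - b) * (pd f i z - f z)) ≠ 0) :
    ∀ z w, f z = f w :=
  stmt_0_general a b hab f hf h
end

section
/- Let n ≥ 1 and let 0 < r < 1/n, so that the polydisc D^n(0,r) = {z ∈ ℂⁿ : |z_j| < r for all j} does not meet the hyperplane {z : z_1 + ⋯ + z_n = 1}. For each integer m ≥ 3 define f_m : D^n(0,r) → ℂ by f_m(z) = m(z_1 + ⋯ + z_n). Then: (1) for every m ≥ 3 and every z ∈ D^n(0,r), the product ∏_{i=1}^n (∂f_m/∂z_i(z) − 1)·(∂f_m/∂z_i(z) − 2)·(∂f_m/∂z_i(z) − f_m(z)) is nonzero; and (2) the family {f_m : m ≥ 3} is not normal in D^n(0,r), i.e., the sequence (f_m)_{m≥3} has no subsequence that converges locally uniformly on D^n(0,r). -/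
/-!
Every partial derivative of `f_m` is the constant `m ∉ {1, 2}`, and `m - f_m(z) = m (1 - ∑ zⱼ)`
vanishes nowhere on the polydisc since `‖∑ zⱼ‖ ≤ n r < 1`. At a point with `∑ zⱼ ≠ 0` the values
`f_m(z) = m ∑ zⱼ` tend to infinity, so no subsequence converges even pointwise.
-/

open Filter Topology Metric

theorem pd_const_mul_sum {n : ℕ} (c : ℂ) (i : Fin n) (z : EuclideanSpace ℂ (Fin n)) :
    pd (fun z => c * ∑ j, z j) i z = c := by
  have hlin : (fun z : EuclideanSpace ℂ (Fin n) => c * ∑ j, z j) =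
      ⇑(c • ∑ j, EuclideanSpace.proj (𝕜 := ℂ) j) := by
    ext z; simp
  rw [pd, hlin, ContinuousLinearMap.fderiv]
  simp

theorem norm_sum_lt_one_of_norm_le {ι E : Type*} [Fintype ι] [SeminormedAddCommGroup E]
    {z : ι → E} {r : ℝ} (hz : ∀ j, ‖z j‖ ≤ r) (hr : Fintype.card ι * r < 1) :
    ‖∑ j, z j‖ < 1 :=
  calc ‖∑ j, z j‖ ≤ ∑ _j : ι, r := norm_sum_le_of_le _ fun j _ => hz j
    _ = Fintype.card ι * r := by simp
    _ < 1 := hr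

theorem tendsto_natCast_mul_cobounded {𝕜 : Type*} [RCLike 𝕜] {c : 𝕜} (hc : c ≠ 0) :
    Tendsto (fun k : ℕ => (k : 𝕜) * c) atTop (Bornology.cobounded 𝕜) := by
  rw [← tendsto_norm_atTop_iff_cobounded]
  simp only [norm_mul, RCLike.norm_natCast]
  exact tendsto_natCast_atTop_atTop.atTop_mul_const (norm_pos_iff.mpr hc)

theorem stmt_1_general {n : ℕ} (r : ℝ) (hr : 0 < r) (hr' : r < 1 / n)
    (P : Set (EuclideanSpace ℂ (Fin n)))
    (hP : P = {z : EuclideanSpace ℂ (Fin n) | ∀ j, ‖z j‖ < r})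
    (f : ℕ → EuclideanSpace ℂ (Fin n) → ℂ)
    (hf : ∀ m, ∀ z, f m z = (m : ℂ) * ∑ j, z j) :
    (∀ m : ℕ, 3 ≤ m → ∀ z ∈ P, (∏ i : Fin n,
        (pd (f m) i z - 1) * (pd (f m) i z - 2) * (pd (f m) i z - f m z)) ≠ 0) ∧
    ¬ ∃ φ : ℕ → ℕ, StrictMono φ ∧ (∀ j, 3 ≤ φ j) ∧
        ∃ g : EuclideanSpace ℂ (Fin n) → ℂ,
          TendstoLocallyUniformlyOn (fun j => f (φ j)) g atTop P := by
  -- for `n = 0` the hypothesis reads `r < 1 / 0 = 0`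
  have hn : 0 < n := Nat.pos_of_ne_zero fun h => by simp [h] at hr'; linarith
  have hnr : (n : ℝ) * r < 1 := by rwa [lt_div_iff₀' (by positivity)] at hr'
  obtain rfl : f = fun (m : ℕ) (z : EuclideanSpace ℂ (Fin n)) => (m : ℂ) * ∑ j, z j :=
    funext₂ hf
  subst hP
  refine ⟨fun m hm z hz => Finset.prod_ne_zero_iff.mpr fun i _ => ?_, ?_⟩
  · have hsum : ∑ j, z j ≠ 1 := fun h => by
      simpa [h] using norm_sum_lt_one_of_norm_le (fun j => (hz j).le) (by simpa using hnr)
    have hm0 : (m : ℂ) ≠ 0 := by exact_mod_cast (by omega : m ≠ 0)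
    have hm1 : (m : ℂ) - 1 ≠ 0 := sub_ne_zero.mpr (by exact_mod_cast (by omega : m ≠ 1))
    have hm2 : (m : ℂ) - 2 ≠ 0 := sub_ne_zero.mpr (by exact_mod_cast (by omega : m ≠ 2))
    have hmf : (m : ℂ) - m * ∑ j, z j ≠ 0 := by
      rw [← mul_one_sub]; exact mul_ne_zero hm0 (sub_ne_zero.mpr hsum.symm)
    simpa only [pd_const_mul_sum] using mul_ne_zero (mul_ne_zero hm1 hm2) hmf
  · rintro ⟨φ, hφ, -, g, hg⟩
    set z₀ : EuclideanSpace ℂ (Fin n) := EuclideanSpace.single ⟨0, hn⟩ (r / 2 : ℂ)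
    have hz₀ : ∀ j, ‖z₀ j‖ < r := by
      intro j
      by_cases h : j = ⟨0, hn⟩ <;> simp [z₀, h, abs_of_pos hr, hr]
    have hsum : ∑ j, z₀ j ≠ 0 := by simp [z₀, hr.ne']
    exact (hg.tendsto_at hz₀).not_tendsto (disjoint_nhds_cobounded _)
      ((tendsto_natCast_mul_cobounded hsum).comp hφ.tendsto_atTop)

/-- Counterexample to Bloch's principle: on the polydisc Dⁿ(0,r) with 0 < r < 1/n,
the functions f_m(z) = m(z₁ + ⋯ + z_n), m ≥ 3, all satisfy the omission property
∏ᵢ (∂f_m/∂zᵢ − 1)(∂f_m/∂zᵢ − 2)(∂f_m/∂zᵢ − f_m) ≠ 0, yet the family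
{f_m : m ≥ 3} is not normal (no subsequence converges locally uniformly). -/
theorem stmt_1 {n : ℕ} (hn : 1 ≤ n) (r : ℝ) (hr : 0 < r) (hr' : r < 1 / n)
    (P : Set (EuclideanSpace ℂ (Fin n)))
    (hP : P = {z : EuclideanSpace ℂ (Fin n) | ∀ j, ‖z j‖ < r})
    (f : ℕ → EuclideanSpace ℂ (Fin n) → ℂ)
    (hf : ∀ m, ∀ z, f m z = (m : ℂ) * ∑ j, z j) :
    (∀ m : ℕ, 3 ≤ m → ∀ z ∈ P, (∏ i : Fin n,
        (pd (f m) i z - 1) * (pd (f m) i z - 2) * (pd (f m) i z - f m z)) ≠ 0) ∧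
    ¬ ∃ φ : ℕ → ℕ, StrictMono φ ∧ (∀ j, 3 ≤ φ j) ∧
        ∃ g : EuclideanSpace ℂ (Fin n) → ℂ,
          TendstoLocallyUniformlyOn (fun j => f (φ j)) g atTop P :=
  stmt_1_general r hr hr' P hP f hf
end

section
/- Let n ≥ 1, let f : ℂⁿ → ℂ be entire, and let k be a positive integer. If f(z) ≠ 0 for all z ∈ ℂⁿ, and (D^k f(z), v) ≠ 1 for all z ∈ ℂⁿ and all v ∈ ℂⁿ with ‖v‖ = 1, then f is constant. -/
/-!
Fix a coordinate direction `e_j` and put `P = ∂ᵏf/∂z_jᵏ`. Testing the hypothesis on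
`v = e_j / P(z)` shows that `‖P‖` never takes the value `1`, so by connectedness either `P` or
`1 / P` is a bounded entire function, and `P` is constant by Liouville. On every complex line
parallel to `e_j` the restriction of `f` then has vanishing `(k+1)`-st derivative, so it is a
polynomial; having no zeros, it is constant. Being constant along every coordinate direction,
`f` is constant.
-/

open Filter Topology Metric

/-- The k-th order pure partial derivative ∂ᵏf/∂z_iᵏ of f : ℂⁿ → ℂ. -/
noncomputable def pdIter {n : ℕ} (k : ℕ) (f : EuclideanSpace ℂ (Fin n) → ℂ) (i : Fin n) :
    EuclideanSpace ℂ (Fin n) → ℂ :=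
  (fun g z => fderiv ℂ g z (EuclideanSpace.single i 1))^[k] f

open Polynomial

section DirectionalDerivative

variable {𝕜 : Type*} [NontriviallyNormedField 𝕜]
  {E : Type*} [NormedAddCommGroup E] [NormedSpace 𝕜 E]
  {F : Type*} [NormedAddCommGroup F] [NormedSpace 𝕜 F]

variable (𝕜) in
noncomputable def iteratedDirDeriv (e : E) (k : ℕ) (f : E → F) : E → F :=
  (fun g z => fderiv 𝕜 g z e)^[k] f

lemma iteratedDirDeriv_succ (e : E) (k : ℕ) (f : E → F) :
    iteratedDirDeriv 𝕜 e (k + 1) f = fun z => fderiv 𝕜 (iteratedDirDeriv 𝕜 e k f) z e :=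
  Function.iterate_succ_apply' _ _ _

lemma AnalyticOnNhd.iteratedDirDeriv [CompleteSpace F] {f : E → F} {s : Set E}
    (hf : AnalyticOnNhd 𝕜 f s) (e : E) (k : ℕ) :
    AnalyticOnNhd 𝕜 (iteratedDirDeriv 𝕜 e k f) s := by
  induction k with
  | zero => exact hf
  | succ k ih =>
    rw [iteratedDirDeriv_succ]
    exact fun z hz => ((ContinuousLinearMap.apply 𝕜 F e).analyticAt _).comp (ih.fderiv z hz)

lemma iteratedDeriv_comp_line [CompleteSpace F] {f : E → F} (hf : AnalyticOnNhd 𝕜 f Set.univ)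
    (a e : E) (k : ℕ) :
    iteratedDeriv k (fun t : 𝕜 => f (a + t • e)) =
      fun t => iteratedDirDeriv 𝕜 e k f (a + t • e) := by
  have hline (t : 𝕜) : HasDerivAt (fun t : 𝕜 => a + t • e) e t := by
    simpa using ((hasDerivAt_id t).smul_const e).const_add a
  induction k with
  | zero => rfl
  | succ k ih =>
    ext t
    have hdiff := ((hf.iteratedDirDeriv e k) _ (Set.mem_univ (a + t • e))).differentiableAt
    have hchain : HasDerivAt (fun t => iteratedDirDeriv 𝕜 e k f (a + t • e))
        (fderiv 𝕜 (iteratedDirDeriv 𝕜 e k f) (a + t • e) e) t :=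
      hdiff.hasFDerivAt.comp_hasDerivAt t (hline t)
    rw [iteratedDeriv_succ, ih, hchain.deriv, iteratedDirDeriv_succ]

end DirectionalDerivative

lemma Differentiable.exists_polynomial_eval_eq {g : ℂ → ℂ} (hg : Differentiable ℂ g)
    {m : ℕ} (hm : iteratedDeriv m g = 0) : ∃ p : ℂ[X], ∀ z, p.eval z = g z := by
  have hhigh (r : ℕ) : iteratedDeriv (r + m) g = 0 := by
    rw [iteratedDeriv_eq_iterate] at hm ⊢
    rw [Function.iterate_add_apply, hm]
    exact Function.iterate_fixed (by simp) r
  refine ⟨∑ n ∈ Finset.range m, C ((n.factorial : ℂ)⁻¹ * iteratedDeriv n g 0) * X ^ n,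
    fun z => ?_⟩
  rw [← Complex.taylorSeries_eq_of_entire' 0 z hg, tsum_eq_sum (s := Finset.range m)]
  · simp [eval_finsetSum]
  · intro n hn
    obtain ⟨r, rfl⟩ := Nat.exists_eq_add_of_le' (not_lt.mp (Finset.mem_range.not.mp hn))
    simp [hhigh r]

lemma Differentiable.apply_eq_apply_of_iteratedDeriv_eq_zero {g : ℂ → ℂ}
    (hg : Differentiable ℂ g) {m : ℕ} (hm : iteratedDeriv m g = 0) (h0 : ∀ z, g z ≠ 0)
    (z w : ℂ) : g z = g w := by
  obtain ⟨p, hp⟩ := hg.exists_polynomial_eval_eq hm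
  have hdeg : p.degree ≤ 0 := by
    by_contra hpos
    obtain ⟨x, hx⟩ := Complex.exists_root (not_le.mp hpos)
    exact h0 x (hp x ▸ hx)
  rw [← hp, ← hp, eq_C_of_degree_le_zero hdeg, eval_C, eval_C]

lemma Continuous.forall_lt_or_forall_gt_of_ne {X α : Type*} [TopologicalSpace X]
    [PreconnectedSpace X] [LinearOrder α] [TopologicalSpace α] [OrderClosedTopology α]
    {g : X → α} (hg : Continuous g) {r : α} (h : ∀ x, g x ≠ r) :
    (∀ x, g x < r) ∨ ∀ x, r < g x := by
  by_contra! ⟨⟨x, hx⟩, ⟨y, hy⟩⟩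
  obtain ⟨z, hz⟩ := intermediate_value_univ y x hg ⟨hy, hx⟩
  exact h z hz

lemma Differentiable.apply_eq_apply_of_norm_ne {E : Type*} [NormedAddCommGroup E]
    [NormedSpace ℂ E] {f : E → ℂ} (hf : Differentiable ℂ f) {r : ℝ} (hr : 0 < r)
    (h : ∀ z, ‖f z‖ ≠ r) (z w : E) : f z = f w := by
  rcases hf.continuous.norm.forall_lt_or_forall_gt_of_ne h with hlt | hgt
  · refine hf.apply_eq_apply_of_bounded ((isBounded_closedBall (x := 0) (r := r)).subset ?_) z w
    exact Set.range_subset_iff.2 fun z => mem_closedBall_zero_iff.2 (hlt z).le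
  · have hne (z : E) : f z ≠ 0 := norm_pos_iff.mp (hr.trans (hgt z))
    refine inv_injective ((hf.inv hne).apply_eq_apply_of_bounded
      ((isBounded_closedBall (x := 0) (r := r⁻¹)).subset ?_) z w)
    refine Set.range_subset_iff.2 fun z => mem_closedBall_zero_iff.2 ?_
    rw [Pi.inv_apply, norm_inv]
    exact inv_anti₀ hr (hgt z).le

lemma Module.Basis.apply_eq_apply_of_forall_add_smul {R M ι α : Type*} [Ring R]
    [AddCommGroup M] [Module R M] [Fintype ι] (b : Basis ι R M) {f : M → α}
    (h : ∀ a i (t : R), f (a + t • b i) = f a) (z w : M) : f z = f w := by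
  classical
  have key (s : Finset ι) (a : M) : f (a + ∑ i ∈ s, b.repr (w - z) i • b i) = f a := by
    induction s using Finset.induction_on generalizing a with
    | empty => simp
    | insert j s hj ih => rw [Finset.sum_insert hj, ← add_assoc, add_right_comm, h, ih]
  have := key Finset.univ z
  rw [b.sum_repr, add_sub_cancel] at this
  exact this.symm

lemma norm_pdIter_ne_one {n k : ℕ} {f : EuclideanSpace ℂ (Fin n) → ℂ}
    (h1 : ∀ z, ∀ v : EuclideanSpace ℂ (Fin n), ‖v‖ = 1 →
      (∑ j, pdIter k f j z * v j) ≠ 1)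
    (j : Fin n) (z : EuclideanSpace ℂ (Fin n)) : ‖pdIter k f j z‖ ≠ 1 := by
  intro hnorm
  have hne : pdIter k f j z ≠ 0 := norm_ne_zero_iff.mp (by rw [hnorm]; exact one_ne_zero)
  refine h1 z (EuclideanSpace.single j (pdIter k f j z)⁻¹) (by simp [hnorm]) ?_
  rw [Finset.sum_eq_single j (fun i _ hij => by simp [hij]) (by simp)]
  simp [hne]

theorem stmt_5_general {n : ℕ} (k : ℕ)
    (f : EuclideanSpace ℂ (Fin n) → ℂ) (hf : AnalyticOnNhd ℂ f Set.univ)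
    (h0 : ∀ z, f z ≠ 0)
    (h1 : ∀ z, ∀ v : EuclideanSpace ℂ (Fin n), ‖v‖ = 1 →
      (∑ j, pdIter k f j z * v j) ≠ 1) :
    ∀ z w, f z = f w := by
  have hdiff {g : EuclideanSpace ℂ (Fin n) → ℂ} (hg : AnalyticOnNhd ℂ g Set.univ) :
      Differentiable ℂ g :=
    differentiableOn_univ.mp hg.differentiableOn
  -- `pdIter k f j` is `iteratedDirDeriv ℂ (EuclideanSpace.single j 1) k f` by unfolding.
  have hpd_const (j : Fin n) (z w) : pdIter k f j z = pdIter k f j w :=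
    (hdiff (hf.iteratedDirDeriv _ k)).apply_eq_apply_of_norm_ne one_pos
      (norm_pdIter_ne_one h1 j) z w
  refine (EuclideanSpace.basisFun (Fin n) ℂ).toBasis.apply_eq_apply_of_forall_add_smul
    fun a j t => ?_
  rw [OrthonormalBasis.coe_toBasis, EuclideanSpace.basisFun_apply]
  set e := EuclideanSpace.single j (1 : ℂ)
  have hline : iteratedDeriv (k + 1) (fun t : ℂ => f (a + t • e)) = 0 := by
    have hconst : (fun t : ℂ => pdIter k f j (a + t • e)) = fun _ => pdIter k f j a :=
      funext fun t => hpd_const j _ _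
    rw [iteratedDeriv_succ, iteratedDeriv_comp_line hf]
    exact (congrArg deriv hconst).trans (deriv_const' _)
  simpa using ((hdiff hf).comp ((differentiable_id.smul_const e).const_add a)
    ).apply_eq_apply_of_iteratedDeriv_eq_zero hline (fun _ => h0 _) t 0

/-- Picard-type theorem: if f is entire on ℂⁿ, never 0, and (Dᵏf(z), v) ≠ 1 for all z
and all unit vectors v, then f is constant. -/
theorem stmt_5 {n : ℕ} (hn : 1 ≤ n) (k : ℕ) (hk : 1 ≤ k)
    (f : EuclideanSpace ℂ (Fin n) → ℂ) (hf : AnalyticOnNhd ℂ f Set.univ)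
    (h0 : ∀ z, f z ≠ 0)
    (h1 : ∀ z, ∀ v : EuclideanSpace ℂ (Fin n), ‖v‖ = 1 →
      (∑ j, pdIter k f j z * v j) ≠ 1) :
    ∀ z w, f z = f w :=
  stmt_5_general k f hf h0 h1
end

section
/- (Several-variables Grahl–Nevo theorem.) Let D ⊆ ℂⁿ be a domain and let ε > 0. Then the family 𝓕 = { f ∈ 𝓗(D) : f^#(z) > ε for all z ∈ D } is normal in D, where f^#(z) = sup_{‖v‖=1} |(Df(z), v)| / (1 + |f(z)|²). -/
open Filter Topology Metric

/-- The spherical derivative f^#(z) = sup_{‖v‖=1} |(Df(z), v)| / (1 + |f(z)|²). -/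
noncomputable def sphDeriv {n : ℕ} (f : EuclideanSpace ℂ (Fin n) → ℂ)
    (z : EuclideanSpace ℂ (Fin n)) : ℝ :=
  (⨆ v : Metric.sphere (0 : EuclideanSpace ℂ (Fin n)) 1,
      ‖∑ j, pd f j z * (v : EuclideanSpace ℂ (Fin n)) j‖) /
    (1 + ‖f z‖ ^ 2)

/-- A family 𝓕 is normal on D if every sequence in 𝓕 has a subsequence converging
locally uniformly on D. -/
def IsNormalFamilyOn {n : ℕ} (D : Set (EuclideanSpace ℂ (Fin n)))
    (𝓕 : Set (EuclideanSpace ℂ (Fin n) → ℂ)) : Prop :=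
  ∀ F : ℕ → EuclideanSpace ℂ (Fin n) → ℂ, (∀ j, F j ∈ 𝓕) →
    ∃ φ : ℕ → ℕ, StrictMono φ ∧ ∃ g : EuclideanSpace ℂ (Fin n) → ℂ,
      TendstoLocallyUniformlyOn (fun j => F (φ j)) g atTop D

/-!
Maximizing `|f w| (δ - |w - z₀|)` over a closed ball of radius `δ` inside `D` and applying the
Cauchy estimate at the maximum point shows that `f^# > ε` forces `|f z₀| ≤ 8 / (ε δ)`. The family
is therefore locally uniformly bounded, hence normal by Montel's theorem, which follows from the
Schwarz lemma (equicontinuity) and the Arzelà–Ascoli theorem.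
-/

open Set Uniformity UniformConvergence

section ArzelaAscoli

variable {X α : Type*} [TopologicalSpace X] [UniformSpace α] [T2Space α]
  [IsCountablyGenerated (𝓤 α)]

/-- Since `X` is σ-compact, the topology of compact convergence is first countable, so the
compact closure provided by Arzelà–Ascoli is sequentially compact. -/
theorem exists_strictMono_tendstoLocallyUniformly [LocallyCompactSpace X] [SigmaCompactSpace X]
    {F : ℕ → X → α} (hF : Equicontinuous F) (hbdd : ∀ x, ∃ Q, IsCompact Q ∧ ∀ j, F j x ∈ Q) :
    ∃ φ : ℕ → ℕ, StrictMono φ ∧ ∃ g, TendstoLocallyUniformly (fun j => F (φ j)) g atTop := by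
  let 𝔖 := {K : Set X | IsCompact K}
  let G : ℕ → X →ᵤ[𝔖] α := fun j => UniformOnFun.ofFun 𝔖 (F j)
  have : IsCountablyGenerated (𝓤 (X →ᵤ[𝔖] α)) :=
    let K := CompactExhaustion.choice X
    UniformOnFun.isCountablyGenerated_uniformity 𝔖 K.isCompact K.subset
      fun _ => K.exists_superset_of_isCompact
  have hcpt : IsCompact (closure (range G)) := by
    refine ArzelaAscoli.isCompact_closure_of_isClosedEmbedding (F := UniformOnFun.toFun 𝔖)
      (fun K hK => hK) IsClosedEmbedding.id (fun K _ => ?_) fun _ _ x _ => ?_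
    · exact (equicontinuous_iff_range.1 hF).equicontinuousOn K
    · obtain ⟨Q, hQ, hFQ⟩ := hbdd x
      exact ⟨Q, hQ, forall_mem_range.2 hFQ⟩
  obtain ⟨g, -, φ, hφ, hlim⟩ := hcpt.tendsto_subseq fun j => subset_closure (mem_range_self j)
  refine ⟨φ, hφ, UniformOnFun.toFun 𝔖 g, ?_⟩
  rw [tendstoLocallyUniformly_iff_forall_isCompact]
  exact UniformOnFun.tendsto_iff_tendstoUniformlyOn.1 hlim

theorem exists_strictMono_tendstoLocallyUniformlyOn [LocallyCompactSpace X]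
    [SecondCountableTopology X] {D : Set X} (hD : IsOpen D) {F : ℕ → X → α}
    (hF : EquicontinuousOn F D) (hbdd : ∀ x ∈ D, ∃ Q, IsCompact Q ∧ ∀ j, F j x ∈ Q) :
    ∃ φ : ℕ → ℕ, StrictMono φ ∧ ∃ g, TendstoLocallyUniformlyOn (fun j => F (φ j)) g atTop D := by
  have := hD.locallyCompactSpace
  obtain ⟨φ, hφ, g, hg⟩ := exists_strictMono_tendstoLocallyUniformly
    ((equicontinuous_restrict_iff F).2 hF) fun x => hbdd x x.2
  refine ⟨φ, hφ, Function.extend (↑) g (F 0), ?_⟩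
  rwa [tendstoLocallyUniformlyOn_iff_tendstoLocallyUniformly_comp_coe,
    Function.extend_comp Subtype.val_injective]

end ArzelaAscoli

theorem mapsTo_closedBall_of_forall_norm_le {β γ : Type*} [SeminormedAddCommGroup γ] {f : β → γ}
    {s : Set β} {c : β} {C : ℝ} (hc : c ∈ s)
    (hC : ∀ w ∈ s, ‖f w‖ ≤ C) : MapsTo f s (closedBall (f c) (2 * C)) := fun w hw => by
  rw [mem_closedBall]
  linarith [dist_le_norm_add_norm (f w) (f c), hC w hw, hC c hc]

section Holomorphic

variable {E F : Type*} [NormedAddCommGroup E] [NormedSpace ℂ E] [NormedAddCommGroup F]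
  [NormedSpace ℂ F]

theorem equicontinuousAt_of_forall_mem_ball_norm_le {ι : Type*} {f : ι → E → F} {x : E}
    {r C : ℝ} (hr : 0 < r) (hd : ∀ i, DifferentiableOn ℂ (f i) (ball x r))
    (hC : ∀ i, ∀ w ∈ ball x r, ‖f i w‖ ≤ C) : EquicontinuousAt f x := by
  refine Metric.equicontinuousAt_of_continuity_modulus (fun y => 2 * C / r * dist y x) ?_ f ?_
  · simpa using ((continuous_id.dist (continuous_const (y := x))).tendsto x).const_mul (2 * C / r)
  · filter_upwards [ball_mem_nhds x hr] with y hy i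
    rw [dist_comm]
    exact Complex.dist_le_div_mul_dist_of_mapsTo_ball (hd i)
      (mapsTo_closedBall_of_forall_norm_le (mem_ball_self hr) (hC i)) hy

/-- Montel's theorem. -/
theorem exists_strictMono_tendstoLocallyUniformlyOn_of_differentiableOn [ProperSpace E]
    [ProperSpace F] {D : Set E} (hD : IsOpen D) {f : ℕ → E → F}
    (hd : ∀ j, DifferentiableOn ℂ (f j) D)
    (hb : ∀ x ∈ D, ∃ C, ∀ᶠ w in 𝓝 x, ∀ j, ‖f j w‖ ≤ C) :
    ∃ φ : ℕ → ℕ, StrictMono φ ∧ ∃ g, TendstoLocallyUniformlyOn (fun j => f (φ j)) g atTop D := by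
  refine exists_strictMono_tendstoLocallyUniformlyOn hD (fun x hx => ?_) fun x hx => ?_
  · obtain ⟨C, hC⟩ := hb x hx
    obtain ⟨r, hr, hrD⟩ := Metric.eventually_nhds_iff_ball.1 ((hD.eventually_mem hx).and hC)
    exact (equicontinuousAt_of_forall_mem_ball_norm_le hr
      (fun j => (hd j).mono fun w hw => (hrD w hw).1) fun j w hw => (hrD w hw).2 j)
      |>.equicontinuousWithinAt D
  · obtain ⟨C, hC⟩ := hb x hx
    exact ⟨closedBall 0 C, isCompact_closedBall 0 C,
      fun j => mem_closedBall_zero_iff.2 (hC.self_of_nhds j)⟩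

/-- Let `z₁` maximize `‖f w‖ * (δ - dist w z₀)` and let `r` be half the distance from `z₁` to the
sphere. Then `‖f‖ ≤ 2 ‖f z₁‖` on `ball z₁ r`, so the Cauchy estimate gives
`ε ‖f z₁‖² ≤ 4 ‖f z₁‖ / r`, i.e. `ε ‖f z₁‖ r ≤ 4`. -/
theorem norm_le_of_mul_sq_le_norm_fderiv [ProperSpace E] {f : E → F} {z₀ : E} {δ ε : ℝ}
    (hδ : 0 < δ) (hε : 0 < ε) (hd : DifferentiableOn ℂ f (closedBall z₀ δ))
    (hf : ∀ z ∈ closedBall z₀ δ, ε * ‖f z‖ ^ 2 ≤ ‖fderiv ℂ f z‖) :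
    ‖f z₀‖ ≤ 8 / (ε * δ) := by
  obtain ⟨z₁, hz₁, hmax⟩ := (isCompact_closedBall z₀ δ).exists_isMaxOn
    (nonempty_closedBall.2 hδ.le)
    (hd.continuousOn.norm.mul
      (continuousOn_const.sub (continuous_id.dist continuous_const).continuousOn))
  set M := ‖f z₁‖ * (δ - dist z₁ z₀)
  have hz₀ : ‖f z₀‖ * (δ - dist z₀ z₀) ≤ M := hmax (mem_closedBall_self hδ.le)
  rw [dist_self, sub_zero] at hz₀
  suffices ε * M ≤ 8 by
    rw [le_div_iff₀ (by positivity)]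
    nlinarith
  rcases le_or_gt M 0 with hM | hM
  · nlinarith
  have hfz₁ : 0 < ‖f z₁‖ := pos_of_mul_pos_left hM (by linarith [mem_closedBall.1 hz₁])
  set r := (δ - dist z₁ z₀) / 2 with hr_def
  have hM_eq : M = ‖f z₁‖ * (2 * r) := by rw [hr_def]; ring
  have hr : 0 < r := half_pos (pos_of_mul_pos_right hM (norm_nonneg _))
  have hball : ball z₁ r ⊆ closedBall z₀ δ := fun w hw => by
    rw [mem_closedBall]
    linarith [dist_triangle w z₁ z₀, mem_ball.1 hw, mem_closedBall.1 hz₁]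
  have hbound : ∀ w ∈ ball z₁ r, ‖f w‖ ≤ 2 * ‖f z₁‖ := fun w hw => by
    have hw' : r ≤ δ - dist w z₀ := by
      linarith [dist_triangle w z₁ z₀, mem_ball.1 hw]
    have hmax_w : ‖f w‖ * (δ - dist w z₀) ≤ M := hmax (hball hw)
    nlinarith [mul_le_mul_of_nonneg_left hw' (norm_nonneg (f w))]
  have hderiv : ‖fderiv ℂ f z₁‖ ≤ 2 * (2 * ‖f z₁‖) / r :=
    Complex.norm_fderiv_le_div_of_mapsTo_ball (hd.mono hball)
      (mapsTo_closedBall_of_forall_norm_le (mem_ball_self hr) hbound) hr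
  have hz₁_bound := (hf z₁ hz₁).trans hderiv
  rw [le_div_iff₀ hr] at hz₁_bound
  rw [hM_eq]
  nlinarith

end Holomorphic

theorem sum_pd_mul_eq_fderiv {n : ℕ} (f : EuclideanSpace ℂ (Fin n) → ℂ)
    (z v : EuclideanSpace ℂ (Fin n)) : ∑ j, pd f j z * v j = fderiv ℂ f z v := by
  conv_rhs => rw [← (EuclideanSpace.basisFun (Fin n) ℂ).sum_repr v]
  simp [pd, mul_comm]

theorem mul_sq_le_norm_fderiv_of_lt_sphDeriv {n : ℕ} {f : EuclideanSpace ℂ (Fin n) → ℂ}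
    {z : EuclideanSpace ℂ (Fin n)} {ε : ℝ} (hε : 0 ≤ ε) (h : ε < sphDeriv f z) :
    ε * ‖f z‖ ^ 2 ≤ ‖fderiv ℂ f z‖ := by
  have hsup : sphDeriv f z * (1 + ‖f z‖ ^ 2) ≤ ‖fderiv ℂ f z‖ := by
    rw [sphDeriv, div_mul_cancel₀ _ (by positivity)]
    refine Real.iSup_le (fun v => ?_) (norm_nonneg _)
    rw [sum_pd_mul_eq_fderiv]
    simpa using (fderiv ℂ f z).le_opNorm v
  nlinarith

theorem stmt_11_general {n : ℕ} (D : Set (EuclideanSpace ℂ (Fin n)))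
    (hD : IsOpen D) (ε : ℝ) (hε : 0 < ε) :
    IsNormalFamilyOn D
      {f | AnalyticOnNhd ℂ f D ∧ ∀ z ∈ D, sphDeriv f z > ε} := by
  intro F hF
  refine exists_strictMono_tendstoLocallyUniformlyOn_of_differentiableOn hD
    (fun j => (hF j).1.differentiableOn) fun x hx => ?_
  obtain ⟨r, hr, hrD⟩ := Metric.isOpen_iff.1 hD x hx
  refine ⟨8 / (ε * (r / 2)), eventually_of_mem (ball_mem_nhds x (half_pos hr)) fun w hw j => ?_⟩
  have hwD : closedBall w (r / 2) ⊆ D :=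
    (closedBall_subset_ball' (by linarith [mem_ball.1 hw])).trans hrD
  exact norm_le_of_mul_sq_le_norm_fderiv (half_pos hr) hε ((hF j).1.differentiableOn.mono hwD)
    fun z hz => mul_sq_le_norm_fderiv_of_lt_sphDeriv hε.le ((hF j).2 z (hwD hz))

/-- Several-variables Grahl–Nevo theorem: for ε > 0, the family of holomorphic f on a
domain D with f^#(z) > ε for all z ∈ D is normal in D. -/
theorem stmt_11 {n : ℕ} (hn : 1 ≤ n) (D : Set (EuclideanSpace ℂ (Fin n)))
    (hD : IsOpen D) (hDconn : IsConnected D) (ε : ℝ) (hε : 0 < ε) :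
    IsNormalFamilyOn D
      {f | AnalyticOnNhd ℂ f D ∧ ∀ z ∈ D, sphDeriv f z > ε} :=
  stmt_11_general D hD ε hε
end
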